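/- arXiv:2002.00678 — 3 statements merged into one kernel-verified Lean document; each statement's English description precedes it below -/
import Mathlib

section
/- Let F be a field of characteristic zero, J an infinite set, and I ⊆ J a finite subset with at least two elements. Let p : V → V be the F-linear projection with p e_j = e_j for j ∈ I and p e_j = 0 for j ∉ I, and set sl_I(F) = {f ∈ sl_J(F) : p ∘ f ∘ p = f}, a Lie subalgebra of sl_J(F). If Δ is a local derivation of sl_J(F), then for every x ∈ sl_I(F) the element p ∘ (Δ x) ∘ p lies in sl_I(F), and the map sl_I(F) → sl_I(F) given by x ↦ p ∘ (Δ x) ∘ p is a local derivation of sl_I(F). -/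
set_option maxHeartbeats 1000000
set_option synthInstance.maxHeartbeats 1000000

attribute [local instance 100] LieRing.ofAssociativeRing

/-- An `F`-linear endomorphism `f` of `ι →₀ F` is *finitary* if the set of pairs `(i, j)`
with `(f eⱼ) i ≠ 0` (where `eⱼ = single j 1` are the standard basis vectors) is finite. -/
def Finitary (F : Type*) [Field F] {ι : Type*} (f : Module.End F (ι →₀ F)) : Prop :=
  {p : ι × ι | f (Finsupp.single p.2 1) p.1 ≠ 0}.Finite

/-- The trace of a (finitary) endomorphism of `ι →₀ F`. -/
noncomputable def trF (F : Type*) [Field F] {ι : Type*} (f : Module.End F (ι →₀ F)) : F :=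
  ∑ᶠ j, f (Finsupp.single j 1) j

section SL

variable {F : Type*} [Field F] {ι : Type*}

lemma end_apply_eq_sum (f : Module.End F (ι →₀ F)) (v : ι →₀ F) :
    f v = ∑ i ∈ v.support, v i • f (Finsupp.single i 1) := by
  conv_lhs => rw [← Finsupp.sum_single v, Finsupp.sum, map_sum]
  exact Finset.sum_congr rfl fun i _ => by rw [← Finsupp.smul_single_one, map_smul]

lemma column_eq_zero {f : Module.End F (ι →₀ F)} {j : ι}
    (h : ∀ i, f (Finsupp.single j 1) i = 0) : f (Finsupp.single j 1) = 0 := by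
  ext i; simpa using h i

namespace Finitary

variable {f g : Module.End F (ι →₀ F)}

lemma add (hf : Finitary F f) (hg : Finitary F g) : Finitary F (f + g) := by
  refine (hf.union hg).subset fun p hp => ?_
  by_contra h
  try push_neg at h
  simp only [Set.mem_union, Set.mem_setOf_eq, not_or, not_not] at h
  exact hp (by simp [LinearMap.add_apply, Finsupp.add_apply, h.1, h.2])

lemma zero : Finitary F (0 : Module.End F (ι →₀ F)) := by
  have h : {p : ι × ι | (0 : Module.End F (ι →₀ F)) (Finsupp.single p.2 1) p.1 ≠ 0} = ∅ := by
    ext p; simp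
  unfold Finitary
  rw [h]
  exact Set.finite_empty

lemma smul (c : F) (hf : Finitary F f) : Finitary F (c • f) := by
  refine hf.subset fun p hp => ?_
  simp only [Set.mem_setOf_eq, LinearMap.smul_apply, Finsupp.smul_apply] at hp ⊢
  intro h
  exact hp (by simp [h])

lemma neg (hf : Finitary F f) : Finitary F (-f) := by
  refine hf.subset fun p hp => ?_
  simp only [Set.mem_setOf_eq, LinearMap.neg_apply, Finsupp.neg_apply, neg_ne_zero] at hp ⊢
  exact hp

lemma sub (hf : Finitary F f) (hg : Finitary F g) : Finitary F (f - g) := by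
  have h : f - g = f + -g := sub_eq_add_neg f g
  rw [h]
  exact hf.add hg.neg

lemma mul (hf : Finitary F f) (hg : Finitary F g) : Finitary F (f * g) := by
  refine ((hf.image Prod.fst).prod (hg.image Prod.snd)).subset ?_
  rintro ⟨k, l⟩ hkl
  simp only [Set.mem_setOf_eq, Module.End.mul_apply] at hkl
  constructor
  · -- k ∈ Prod.fst '' S_f
    by_contra hk
    apply hkl
    rw [end_apply_eq_sum f (g (Finsupp.single l 1)), Finset.sum_apply']
    refine Finset.sum_eq_zero fun i _ => ?_
    have : f (Finsupp.single i 1) k = 0 := by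
      by_contra h
      exact hk ⟨(k, i), h, rfl⟩
    simp [this]
  · -- l ∈ Prod.snd '' S_g
    by_contra hl
    apply hkl
    have : g (Finsupp.single l 1) = 0 := by
      refine column_eq_zero fun i => ?_
      by_contra h
      exact hl ⟨(i, l), h, rfl⟩
    rw [this, map_zero]
    simp

end Finitary

lemma trace_support_finite {f : Module.End F (ι →₀ F)} (hf : Finitary F f) :
    (Function.support fun j => f (Finsupp.single j 1) j).Finite :=
  (hf.image Prod.fst).subset fun j hj => ⟨(j, j), hj, rfl⟩

lemma trF_add {f g : Module.End F (ι →₀ F)} (hf : Finitary F f) (hg : Finitary F g) :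
    trF F (f + g) = trF F f + trF F g := by
  unfold trF
  rw [← finsum_add_distrib (trace_support_finite hf) (trace_support_finite hg)]
  simp [LinearMap.add_apply]

lemma trF_zero : trF F (0 : Module.End F (ι →₀ F)) = 0 := by
  unfold trF; simp

lemma trF_neg (f : Module.End F (ι →₀ F)) : trF F (-f) = -trF F f := by
  unfold trF
  rw [← finsum_neg_distrib]
  simp

lemma trF_sub {f g : Module.End F (ι →₀ F)} (hf : Finitary F f) (hg : Finitary F g) :
    trF F (f - g) = trF F f - trF F g := by
  have h2 : f - g = f + -g := sub_eq_add_neg f g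
  have h := trF_add hf hg.neg
  rw [trF_neg] at h
  rw [h2, h, sub_eq_add_neg]

lemma trF_smul (c : F) (f : Module.End F (ι →₀ F)) : trF F (c • f) = c * trF F f := by
  unfold trF
  rcases (Function.support fun j => f (Finsupp.single j 1) j).finite_or_infinite with h | h
  · rw [mul_finsum _ _]; simp
  · by_cases hc : c = 0
    · simp [hc]
    · have h2 : (Function.support fun j => (c • f) (Finsupp.single j 1) j).Infinite := by
        refine h.mono fun j hj => ?_
        simp only [Function.mem_support, LinearMap.smul_apply, Finsupp.smul_apply,
          smul_eq_mul] at hj ⊢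
        exact mul_ne_zero hc hj
      rw [finsum_of_infinite_support h, finsum_of_infinite_support h2, mul_zero]

end SL

section SL2

variable {F : Type*} [Field F] {ι : Type*}

lemma entry_formula {g : Module.End F (ι →₀ F)}
    (f : Module.End F (ι →₀ F)) (T : Finset ι)
    (hT : ∀ p : ι × ι, g (Finsupp.single p.2 1) p.1 ≠ 0 → p.1 ∈ T)
    (j k : ι) :
    (f * g) (Finsupp.single j 1) k = ∑ i ∈ T, g (Finsupp.single j 1) i * f (Finsupp.single i 1) k := by
  classical
  rw [Module.End.mul_apply, end_apply_eq_sum f (g (Finsupp.single j 1)), Finset.sum_apply']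
  rw [Finset.sum_subset (fun i hi => hT (i, j) (Finsupp.mem_support_iff.mp hi))]
  · exact Finset.sum_congr rfl fun i _ => by simp [smul_eq_mul]
  · intro i _ hi
    rw [Finsupp.notMem_support_iff.mp hi]
    simp

lemma trF_mul_comm {f g : Module.End F (ι →₀ F)} (hf : Finitary F f) (hg : Finitary F g) :
    trF F (f * g) = trF F (g * f) := by
  classical
  obtain ⟨T, hfT, hgT⟩ :
      ∃ T : Finset ι,
        (∀ p : ι × ι, f (Finsupp.single p.2 1) p.1 ≠ 0 → p.1 ∈ T ∧ p.2 ∈ T) ∧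
        (∀ p : ι × ι, g (Finsupp.single p.2 1) p.1 ≠ 0 → p.1 ∈ T ∧ p.2 ∈ T) := by
    refine ⟨(hf.toFinset ∪ hg.toFinset).biUnion fun p => {p.1, p.2}, fun p hp => ?_, fun p hp => ?_⟩
    · have hmem : p ∈ hf.toFinset ∪ hg.toFinset :=
        Finset.mem_union_left _ (hf.mem_toFinset.mpr hp)
      exact ⟨Finset.mem_biUnion.mpr ⟨p, hmem, by simp⟩, Finset.mem_biUnion.mpr ⟨p, hmem, by simp⟩⟩
    · have hmem : p ∈ hf.toFinset ∪ hg.toFinset :=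
        Finset.mem_union_right _ (hg.mem_toFinset.mpr hp)
      exact ⟨Finset.mem_biUnion.mpr ⟨p, hmem, by simp⟩, Finset.mem_biUnion.mpr ⟨p, hmem, by simp⟩⟩
  -- columns outside T vanish
  have hgcol : ∀ j, j ∉ T → g (Finsupp.single j 1) = 0 := fun j hj =>
    column_eq_zero fun i => by
      by_contra h
      exact hj ((hgT (i, j) h).2)
  have hfcol : ∀ j, j ∉ T → f (Finsupp.single j 1) = 0 := fun j hj =>
    column_eq_zero fun i => by
      by_contra h
      exact hj ((hfT (i, j) h).2)
  have hsupfg : (Function.support fun j => (f * g) (Finsupp.single j 1) j) ⊆ (T : Set ι) := by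
    intro j hj
    by_contra hjT
    apply hj
    simp [Module.End.mul_apply, hgcol j hjT]
  have hsupgf : (Function.support fun j => (g * f) (Finsupp.single j 1) j) ⊆ (T : Set ι) := by
    intro j hj
    by_contra hjT
    apply hj
    simp [Module.End.mul_apply, hfcol j hjT]
  rw [trF, trF, finsum_eq_finset_sum_of_support_subset _ hsupfg,
    finsum_eq_finset_sum_of_support_subset _ hsupgf]
  calc ∑ j ∈ T, (f * g) (Finsupp.single j 1) j
      = ∑ j ∈ T, ∑ i ∈ T, g (Finsupp.single j 1) i * f (Finsupp.single i 1) j :=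
        Finset.sum_congr rfl fun j _ => entry_formula f T (fun p hp => (hgT p hp).1) j j
    _ = ∑ i ∈ T, ∑ j ∈ T, g (Finsupp.single j 1) i * f (Finsupp.single i 1) j := Finset.sum_comm
    _ = ∑ i ∈ T, ∑ j ∈ T, f (Finsupp.single i 1) j * g (Finsupp.single j 1) i :=
        Finset.sum_congr rfl fun i _ => Finset.sum_congr rfl fun j _ => mul_comm _ _
    _ = ∑ i ∈ T, (g * f) (Finsupp.single i 1) i :=
        Finset.sum_congr rfl fun i _ => (entry_formula g T (fun p hp => (hfT p hp).1) i i).symm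

/-- The Lie algebra `sl_J(F)` of finitary trace-zero endomorphisms of `J →₀ F`. -/
def slJ (F : Type*) [Field F] (J : Type*) : LieSubalgebra F (Module.End F (J →₀ F)) where
  carrier := {f | Finitary F f ∧ trF F f = 0}
  add_mem' := fun {a b} ha hb => ⟨ha.1.add hb.1, by rw [trF_add ha.1 hb.1, ha.2, hb.2, add_zero]⟩
  zero_mem' := ⟨Finitary.zero, trF_zero⟩
  smul_mem' := fun c x hx => ⟨hx.1.smul c, by rw [trF_smul, hx.2, mul_zero]⟩
  lie_mem' := fun {x y} hx hy => by
    have hxy : ⁅x, y⁆ = x * y - y * x := Ring.lie_def x y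
    refine ⟨?_, ?_⟩
    · rw [Set.mem_setOf_eq] at *
      rw [hxy]
      exact (hx.1.mul hy.1).sub (hy.1.mul hx.1)
    · rw [hxy, trF_sub (hx.1.mul hy.1) (hy.1.mul hx.1), trF_mul_comm hx.1 hy.1, sub_self]

end SL2

section SLI

variable {F : Type*} [Field F] {J : Type*}

lemma proj_idempotent (I : Set J) (p : Module.End F (J →₀ F))
    (hpI : ∀ j ∈ I, p (Finsupp.single j 1) = Finsupp.single j 1)
    (hpI' : ∀ j ∉ I, p (Finsupp.single j 1) = 0) : p * p = p := by
  refine Finsupp.lhom_ext fun a b => ?_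
  have hb : Finsupp.single a b = b • Finsupp.single a 1 := (Finsupp.smul_single_one a b).symm
  rw [hb, map_smul, map_smul]
  congr 1
  by_cases ha : a ∈ I
  · rw [Module.End.mul_apply, hpI a ha, hpI a ha]
  · rw [Module.End.mul_apply, hpI' a ha, map_zero]

lemma proj_mul_proj {R : Type*} [Ring R] {p x y : R} (hp : p * p = p)
    (hx : p * x * p = x) (hy : p * y * p = y) : p * (x * y) * p = x * y := by
  have hpx : p * x = x := by
    conv_lhs => rw [← hx]
    rw [← mul_assoc, ← mul_assoc, hp, hx]
  have hyp : y * p = y := by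
    conv_lhs => rw [← hy]
    rw [mul_assoc, hp, hy]
  calc p * (x * y) * p = ((p * x) * y) * p := by rw [← mul_assoc]
    _ = (x * y) * p := by rw [hpx]
    _ = x * (y * p) := by rw [mul_assoc]
    _ = x * y := by rw [hyp]

lemma proj_lie_proj {R : Type*} [Ring R] {p x y : R} (hp : p * p = p)
    (hx : p * x * p = x) (hy : p * y * p = y) : p * ⁅x, y⁆ * p = ⁅x, y⁆ := by
  rw [Ring.lie_def, mul_sub, sub_mul, proj_mul_proj hp hx hy, proj_mul_proj hp hy hx]

/-- The Lie subalgebra `sl_I(F) = {f ∈ sl_J(F) : p ∘ f ∘ p = f}` of `sl_J(F)`,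
where `p` is the projection onto the coordinates in `I`. -/
def slI (F : Type*) [Field F] {J : Type*} (I : Set J) (p : Module.End F (J →₀ F))
    (hpI : ∀ j ∈ I, p (Finsupp.single j 1) = Finsupp.single j 1)
    (hpI' : ∀ j ∉ I, p (Finsupp.single j 1) = 0) :
    LieSubalgebra F (Module.End F (J →₀ F)) where
  carrier := {f | f ∈ slJ F J ∧ p * f * p = f}
  add_mem' := fun {a b} ha hb =>
    ⟨(slJ F J).add_mem ha.1 hb.1, by rw [mul_add, add_mul, ha.2, hb.2]⟩
  zero_mem' := ⟨(slJ F J).zero_mem, by rw [mul_zero, zero_mul]⟩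
  smul_mem' := fun c x hx =>
    ⟨(slJ F J).smul_mem c hx.1, by rw [mul_smul_comm, smul_mul_assoc, hx.2]⟩
  lie_mem' := fun {x y} hx hy =>
    ⟨(slJ F J).lie_mem hx.1 hy.1,
      proj_lie_proj (proj_idempotent I p hpI hpI') hx.2 hy.2⟩

lemma mem_slI_iff (I : Set J) (p : Module.End F (J →₀ F))
    (hpI : ∀ j ∈ I, p (Finsupp.single j 1) = Finsupp.single j 1)
    (hpI' : ∀ j ∉ I, p (Finsupp.single j 1) = 0) (f : Module.End F (J →₀ F)) :
    f ∈ slI F I p hpI hpI' ↔ f ∈ slJ F J ∧ p * f * p = f := Iff.rfl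

/-- The inclusion of `sl_I(F)` into `sl_J(F)`. -/
def slItoslJ (F : Type*) [Field F] {J : Type*} (I : Set J) (p : Module.End F (J →₀ F))
    (hpI : ∀ j ∈ I, p (Finsupp.single j 1) = Finsupp.single j 1)
    (hpI' : ∀ j ∉ I, p (Finsupp.single j 1) = 0)
    (x : slI F I p hpI hpI') : slJ F J :=
  ⟨(x : Module.End F (J →₀ F)), ((mem_slI_iff I p hpI hpI' x).mp x.2).1⟩

end SLI

/-! For a derivation `D` of `sl_J(F)` and `a, b` with `p a p = a`, `p b p = b`, one has
`p [u, b] p = [p u p, b]`, so `p (D [a, b]) p = [p (D a) p, b] + [a, p (D b) p]`: compressing `D`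
respects the Leibniz rule on `sl_I(F)`, and `p (D y) p` has trace zero whenever `y` is a bracket
in `sl_I(F)`. Over a field with `2 ≠ 0`, `sl_I(F)` is spanned by such brackets, because
`E i j = ½ [E i i - E j j, E i j]` and `E i i - E j j = [E i j, E j i]`. Hence `p (D y) p ∈ sl_I(F)`
for all `y ∈ sl_I(F)`; applied to a derivation agreeing with `Δ` at `x`, this gives the theorem. -/

namespace IsIdempotentElem

section Semigroup

variable {S : Type*} [Semigroup S] {p a : S}

theorem mul_left_eq_of_mul_mul_eq (hp : IsIdempotentElem p) (ha : p * a * p = a) :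
    p * a = a := by
  rw [← ha, ← mul_assoc, ← mul_assoc, hp.eq]

theorem mul_right_eq_of_mul_mul_eq (hp : IsIdempotentElem p) (ha : p * a * p = a) :
    a * p = a := by
  rw [← ha, mul_assoc, hp.eq]

theorem mul_mul_mul_mul_mul (hp : IsIdempotentElem p) (a : S) :
    p * (p * a * p) * p = p * a * p := by
  simp only [mul_assoc, hp.eq]
  simp only [← mul_assoc, hp.eq]

end Semigroup

variable {R : Type*} [Ring R] {p a : R}

theorem mul_lie_mul_eq_lie_mul_mul (hp : IsIdempotentElem p) (ha : p * a * p = a) (v : R) :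
    p * ⁅a, v⁆ * p = ⁅a, p * v * p⁆ := by
  have hpa := hp.mul_left_eq_of_mul_mul_eq ha
  have hap := hp.mul_right_eq_of_mul_mul_eq ha
  calc p * ⁅a, v⁆ * p = (p * a) * v * p - p * v * (a * p) := by rw [Ring.lie_def]; noncomm_ring
    _ = (a * p) * v * p - p * v * (p * a) := by rw [hpa, hap]
    _ = ⁅a, p * v * p⁆ := by rw [Ring.lie_def]; noncomm_ring

theorem mul_lie_mul_eq_mul_mul_lie (hp : IsIdempotentElem p) (ha : p * a * p = a) (v : R) :
    p * ⁅v, a⁆ * p = ⁅p * v * p, a⁆ := by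
  rw [← lie_skew, mul_neg, neg_mul, hp.mul_lie_mul_eq_lie_mul_mul ha, lie_skew]

end IsIdempotentElem

section FinitaryTrace

variable {F : Type*} [Field F] {ι : Type*}

-- `rw [Ring.lie_def]` fails here: with `LieRing.ofAssociativeRing` a local instance, subtraction
-- on these endomorphisms elaborates through an instance path that `Ring.lie_def` does not match.
theorem Module.End.lie_eq_mul_sub_mul (f g : Module.End F (ι →₀ F)) : ⁅f, g⁆ = f * g - g * f :=
  Ring.lie_def f g

theorem trF_lie {f g : Module.End F (ι →₀ F)} (hf : Finitary F f) (hg : Finitary F g) :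
    trF F ⁅f, g⁆ = 0 := by
  rw [Module.End.lie_eq_mul_sub_mul, trF_sub (hf.mul hg) (hg.mul hf), trF_mul_comm hf hg, sub_self]

variable {p : Module.End F (ι →₀ F)}

noncomputable def compressedTrace (hp : Finitary F p) : slJ F ι →ₗ[F] F where
  toFun z := trF F (p * (z : Module.End F (ι →₀ F)) * p)
  map_add' z w := by
    simp only [AddMemClass.coe_add, mul_add, add_mul]
    exact trF_add ((hp.mul z.2.1).mul hp) ((hp.mul w.2.1).mul hp)
  map_smul' c z := by
    simp only [SetLike.val_smul, mul_smul_comm, smul_mul_assoc]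
    exact trF_smul c _

theorem compressedTrace_apply (hp : Finitary F p) (z : slJ F ι) :
    compressedTrace hp z = trF F (p * (z : Module.End F (ι →₀ F)) * p) := rfl

theorem compressedTrace_lie_eq_zero (hp : Finitary F p) (hpp : IsIdempotentElem p)
    (D : LieDerivation F (slJ F ι) (slJ F ι)) {a b : slJ F ι}
    (ha : p * (a : Module.End F (ι →₀ F)) * p = a)
    (hb : p * (b : Module.End F (ι →₀ F)) * p = b) :
    compressedTrace hp (D ⁅a, b⁆) = 0 := by
  have hcomp (z : slJ F ι) : Finitary F (p * (z : Module.End F (ι →₀ F)) * p) :=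
    (hp.mul z.2.1).mul hp
  rw [D.apply_lie_eq_add, map_add, compressedTrace_apply, compressedTrace_apply,
    LieSubalgebra.coe_bracket, LieSubalgebra.coe_bracket,
    hpp.mul_lie_mul_eq_lie_mul_mul ha, hpp.mul_lie_mul_eq_mul_mul_lie hb,
    trF_lie a.2.1 (hcomp _), trF_lie (hcomp _) b.2.1, add_zero]

end FinitaryTrace

def LieSubalgebra.commutatorSpan {R L : Type*} [CommRing R] [LieRing L] [LieAlgebra R L]
    (K : LieSubalgebra R L) : Submodule R L :=
  Submodule.span R {z | ∃ a ∈ K, ∃ b ∈ K, ⁅a, b⁆ = z}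

theorem LieSubalgebra.lie_mem_commutatorSpan {R L : Type*} [CommRing R] [LieRing L]
    [LieAlgebra R L] {K : LieSubalgebra R L} {a b : L} (ha : a ∈ K) (hb : b ∈ K) :
    ⁅a, b⁆ ∈ K.commutatorSpan :=
  Submodule.subset_span ⟨a, ha, b, hb, rfl⟩

section MatrixUnit

variable {F : Type*} [Field F] {J : Type*}

noncomputable def matrixUnit (F : Type*) [Field F] {J : Type*} (i j : J) :
    Module.End F (J →₀ F) :=
  Finsupp.lsingle i ∘ₗ Finsupp.lapply j

theorem matrixUnit_apply (i j : J) (v : J →₀ F) :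
    matrixUnit F i j v = Finsupp.single i (v j) := rfl

theorem matrixUnit_mul_mul_matrixUnit (i k l j : J) (y : Module.End F (J →₀ F)) :
    matrixUnit F i k * y * matrixUnit F l j = y (Finsupp.single l 1) k • matrixUnit F i j := by
  classical
  ext a m
  rcases eq_or_ne a j with rfl | haj
  · simp [matrixUnit_apply, Finsupp.single_apply]
  · simp [matrixUnit_apply, Finsupp.single_eq_of_ne haj.symm]

theorem lie_matrixUnit_matrixUnit_swap (i j : J) :
    ⁅matrixUnit F i j, matrixUnit F j i⁆ = matrixUnit F i i - matrixUnit F j j := by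
  classical
  ext a m
  simp [Module.End.lie_eq_mul_sub_mul, matrixUnit_apply, Finsupp.single_apply]

theorem lie_matrixUnit_sub_matrixUnit {i j : J} (hij : i ≠ j) :
    ⁅matrixUnit F i i - matrixUnit F j j, matrixUnit F i j⁆ = (2 : F) • matrixUnit F i j := by
  classical
  ext a m
  rcases eq_or_ne a j with rfl | haj
  · rcases eq_or_ne m i with rfl | hmi
    · simp [Module.End.lie_eq_mul_sub_mul, matrixUnit_apply, hij, one_add_one_eq_two]
    · simp [Module.End.lie_eq_mul_sub_mul, matrixUnit_apply, hij, Finsupp.single_eq_of_ne hmi]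
  · simp [Module.End.lie_eq_mul_sub_mul, matrixUnit_apply, Finsupp.single_eq_of_ne haj.symm,
      Finsupp.single_eq_of_ne hij.symm]

theorem finitary_matrixUnit (i j : J) : Finitary F (matrixUnit F i j) := by
  classical
  refine (Set.finite_singleton (i, j)).subset fun q hq => ?_
  obtain ⟨h1, h2⟩ : i = q.1 ∧ q.2 = j := by simpa [matrixUnit_apply, Finsupp.single_apply] using hq
  exact Prod.ext h1.symm h2

theorem trF_matrixUnit_of_ne {i j : J} (hij : i ≠ j) : trF F (matrixUnit F i j) = 0 :=
  finsum_eq_zero_of_forall_eq_zero fun k => by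
    rcases eq_or_ne k j with rfl | hk
    · simp [matrixUnit_apply, hij]
    · simp [matrixUnit_apply, Finsupp.single_eq_of_ne hk.symm]

end MatrixUnit

section Projection

variable {F : Type*} [Field F] {J : Type*} {I : Set J} {p : Module.End F (J →₀ F)}
  (hpI : ∀ j ∈ I, p (Finsupp.single j 1) = Finsupp.single j 1)
  (hpI' : ∀ j ∉ I, p (Finsupp.single j 1) = 0)

include hpI hpI' in
theorem finitary_of_proj (hIfin : I.Finite) : Finitary F p := by
  refine (hIfin.image fun j => (j, j)).subset fun q hq => ?_
  by_cases hq2 : q.2 ∈ I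
  · have hq1 : q.1 = q.2 := by
      by_contra hne
      exact hq (by rw [hpI q.2 hq2, Finsupp.single_eq_of_ne hne])
    exact ⟨q.2, hq2, Prod.ext hq1.symm rfl⟩
  · exact absurd (by rw [hpI' q.2 hq2, Finsupp.zero_apply]) hq

include hpI hpI' in
theorem proj_eq_sum_matrixUnit (hIfin : I.Finite) :
    p = ∑ i ∈ hIfin.toFinset, matrixUnit F i i := by
  classical
  ext a m
  by_cases ha : a ∈ I
  · simp +contextual [hpI a ha, matrixUnit_apply, Finsupp.single_apply, ne_of_mem_of_not_mem ha]
  · simp +contextual [hpI' a ha, matrixUnit_apply, Finsupp.single_apply,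
      fun m (hm : m ∈ I) => (ne_of_mem_of_not_mem hm ha).symm]

include hpI hpI' in
theorem eq_sum_matrixUnit_of_proj_mul_mul_proj (hIfin : I.Finite) {y : Module.End F (J →₀ F)}
    (hy : p * y * p = y) :
    y = ∑ i ∈ hIfin.toFinset, ∑ j ∈ hIfin.toFinset,
      y (Finsupp.single j 1) i • matrixUnit F i j := by
  conv_lhs => rw [← hy, proj_eq_sum_matrixUnit hpI hpI' hIfin, Finset.sum_mul, Finset.sum_mul]
  simp only [Finset.mul_sum, matrixUnit_mul_mul_matrixUnit]

include hpI' in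
theorem trF_eq_sum_of_mul_proj (hIfin : I.Finite) {y : Module.End F (J →₀ F)}
    (hy : y * p = y) : trF F y = ∑ i ∈ hIfin.toFinset, y (Finsupp.single i 1) i := by
  refine finsum_eq_finsetSum_of_support_subset _ fun j hj => ?_
  by_contra hjI
  rw [Set.Finite.coe_toFinset] at hjI
  have hcol : y (Finsupp.single j 1) = 0 := by rw [← hy, Module.End.mul_apply, hpI' j hjI, map_zero]
  exact hj (by simp [hcol])

include hpI hpI' in
theorem proj_mul_matrixUnit_mul_proj {i j : J} (hi : i ∈ I) (hj : j ∈ I) :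
    p * matrixUnit F i j * p = matrixUnit F i j := by
  classical
  ext a m
  by_cases ha : a ∈ I
  · by_cases haj : a = j
    · subst haj; simp [hpI a ha, hpI i hi, matrixUnit_apply]
    · simp [hpI a ha, matrixUnit_apply, haj]
  · have haj : a ≠ j := fun h => ha (h ▸ hj)
    simp [hpI' a ha, matrixUnit_apply, haj]

theorem matrixUnit_mem_slI {i j : J} (hi : i ∈ I) (hj : j ∈ I) (hij : i ≠ j) :
    matrixUnit F i j ∈ slI F I p hpI hpI' :=
  ⟨⟨finitary_matrixUnit i j, trF_matrixUnit_of_ne hij⟩,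
    proj_mul_matrixUnit_mul_proj hpI hpI' hi hj⟩




theorem matrixUnit_sub_matrixUnit_mem_commutatorSpan {i j : J} (hi : i ∈ I) (hj : j ∈ I) :
    matrixUnit F i i - matrixUnit F j j ∈ (slI F I p hpI hpI').commutatorSpan := by
  rcases eq_or_ne i j with rfl | hij
  · convert Submodule.zero_mem _ using 1
    abel
  · rw [← lie_matrixUnit_matrixUnit_swap]
    exact LieSubalgebra.lie_mem_commutatorSpan (matrixUnit_mem_slI hpI hpI' hi hj hij)
      (matrixUnit_mem_slI hpI hpI' hj hi hij.symm)

theorem matrixUnit_mem_commutatorSpan (h2 : (2 : F) ≠ 0) {i j : J} (hi : i ∈ I) (hj : j ∈ I)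
    (hij : i ≠ j) : matrixUnit F i j ∈ (slI F I p hpI hpI').commutatorSpan := by
  have hdiag : matrixUnit F i i - matrixUnit F j j ∈ slI F I p hpI hpI' := by
    rw [← lie_matrixUnit_matrixUnit_swap]
    exact (slI F I p hpI hpI').lie_mem (matrixUnit_mem_slI hpI hpI' hi hj hij)
      (matrixUnit_mem_slI hpI hpI' hj hi hij.symm)
  have h := Submodule.smul_mem _ (2⁻¹ : F)
    (LieSubalgebra.lie_mem_commutatorSpan hdiag (matrixUnit_mem_slI hpI hpI' hi hj hij))
  rwa [lie_matrixUnit_sub_matrixUnit hij, smul_smul, inv_mul_cancel₀ h2, one_smul] at h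

theorem mem_commutatorSpan_of_mem_slI (h2 : (2 : F) ≠ 0) (hIfin : I.Finite)
    {y : Module.End F (J →₀ F)} (hy : y ∈ slI F I p hpI hpI') :
    y ∈ (slI F I p hpI hpI').commutatorSpan := by
  classical
  rw [eq_sum_matrixUnit_of_proj_mul_mul_proj hpI hpI' hIfin hy.2]
  obtain hI | ⟨j₀, hj₀⟩ := I.eq_empty_or_nonempty
  · simp [Set.Finite.toFinset_eq_empty.mpr hI]
  set c : J → J → F := fun i j => y (Finsupp.single j 1) i
  have htr : ∑ i ∈ hIfin.toFinset, c i i = 0 := by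
    have hyp : y * p = y :=
      IsIdempotentElem.mul_right_eq_of_mul_mul_eq (proj_idempotent I p hpI hpI') hy.2
    rw [← trF_eq_sum_of_mul_proj hpI' hIfin hyp]
    exact hy.1.2
  -- trade each diagonal `E i i` for `E i i - E j₀ j₀`; the correction `(∑ i, c i i) • E j₀ j₀`
  -- vanishes since `y` has trace zero
  have hsplit (i j : J) : c i j • matrixUnit F i j =
      c i j • (if i = j then matrixUnit F i i - matrixUnit F j₀ j₀ else matrixUnit F i j) +
        if i = j then c i j • matrixUnit F j₀ j₀ else 0 := by
    split_ifs with hij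
    · subst hij; module
    · rw [add_zero]
  rw [Finset.sum_congr rfl fun i _ => Finset.sum_congr rfl fun j _ => hsplit i j]
  simp only [Finset.sum_add_distrib, Finset.sum_ite_eq]
  rw [Finset.sum_ite_of_true fun _ h => h, ← Finset.sum_smul, htr, zero_smul, add_zero]
  refine Submodule.sum_mem _ fun i hi => Submodule.sum_mem _ fun j hj => Submodule.smul_mem _ _ ?_
  rw [Set.Finite.mem_toFinset] at hi hj
  split_ifs with hij
  · exact matrixUnit_sub_matrixUnit_mem_commutatorSpan hpI hpI' hi hj₀
  · exact matrixUnit_mem_commutatorSpan hpI hpI' h2 hi hj hij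

theorem compressedTrace_derivation_eq_zero (h2 : (2 : F) ≠ 0) (hIfin : I.Finite)
    (D : LieDerivation F (slJ F J) (slJ F J)) (x : slI F I p hpI hpI') :
    compressedTrace (finitary_of_proj hpI hpI' hIfin) (D (slItoslJ F I p hpI hpI' x)) = 0 := by
  set ψ := compressedTrace (finitary_of_proj hpI hpI' hIfin) ∘ₗ D.toLinearMap
  have hspan : (slI F I p hpI hpI').commutatorSpan ≤
      (LinearMap.ker ψ).map (slJ F J).toSubmodule.subtype := by
    rw [LieSubalgebra.commutatorSpan, Submodule.span_le]
    rintro _ ⟨a, ha, b, hb, rfl⟩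
    exact ⟨⁅⟨a, ha.1⟩, ⟨b, hb.1⟩⁆, compressedTrace_lie_eq_zero (finitary_of_proj hpI hpI' hIfin)
      (proj_idempotent I p hpI hpI') D ha.2 hb.2, rfl⟩
  obtain ⟨z, hz, hzx⟩ := hspan (mem_commutatorSpan_of_mem_slI hpI hpI' h2 hIfin x.2)
  obtain rfl : z = slItoslJ F I p hpI hpI' x := Subtype.ext hzx
  exact hz

theorem proj_mul_derivation_mul_proj_mem_slI (h2 : (2 : F) ≠ 0) (hIfin : I.Finite)
    (D : LieDerivation F (slJ F J) (slJ F J)) (x : slI F I p hpI hpI') :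
    p * (D (slItoslJ F I p hpI hpI' x) : Module.End F (J →₀ F)) * p ∈ slI F I p hpI hpI' := by
  have hp := finitary_of_proj hpI hpI' hIfin
  refine ⟨⟨(hp.mul (D _).2.1).mul hp, compressedTrace_derivation_eq_zero hpI hpI' h2 hIfin D x⟩, ?_⟩
  exact IsIdempotentElem.mul_mul_mul_mul_mul (proj_idempotent I p hpI hpI') _

noncomputable def compressLinearMap (G : slJ F J →ₗ[F] slJ F J)
    (hG : ∀ x : slI F I p hpI hpI',
      p * (G (slItoslJ F I p hpI hpI' x) : Module.End F (J →₀ F)) * p ∈ slI F I p hpI hpI') :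
    slI F I p hpI hpI' →ₗ[F] slI F I p hpI hpI' :=
  LinearMap.codRestrict (slI F I p hpI hpI').toSubmodule
    (LinearMap.mulLeftRight F (p, p) ∘ₗ (slJ F J).toSubmodule.subtype ∘ₗ G ∘ₗ
      (LieSubalgebra.inclusion fun _ hx => hx.1 : slI F I p hpI hpI' →ₗ⁅F⁆ slJ F J).toLinearMap)
    hG

noncomputable def compressDerivation (h2 : (2 : F) ≠ 0) (hIfin : I.Finite)
    (D : LieDerivation F (slJ F J) (slJ F J)) :
    LieDerivation F (slI F I p hpI hpI') (slI F I p hpI hpI') where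
  toLinearMap := compressLinearMap hpI hpI' D.toLinearMap
    (proj_mul_derivation_mul_proj_mem_slI hpI hpI' h2 hIfin D)
  leibniz' a b := by
    rw [← lie_skew b, sub_neg_eq_add]
    apply Subtype.ext
    have hpp : IsIdempotentElem p := proj_idempotent I p hpI hpI'
    change p * ((D ⁅slItoslJ F I p hpI hpI' a, slItoslJ F I p hpI hpI' b⁆ : slJ F J) :
      Module.End F (J →₀ F)) * p = _
    rw [D.apply_lie_eq_add, AddMemClass.coe_add, LieSubalgebra.coe_bracket,
      LieSubalgebra.coe_bracket, mul_add, add_mul, hpp.mul_lie_mul_eq_lie_mul_mul a.2.2,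
      hpp.mul_lie_mul_eq_mul_mul_lie b.2.2]
    rfl

end Projection

theorem compression_localDerivation_slI_general (F : Type*) [Field F] [CharZero F]
    (J : Type*) (I : Set J) (hIfin : I.Finite)
    (p : Module.End F (J →₀ F))
    (hpI : ∀ j ∈ I, p (Finsupp.single j 1) = Finsupp.single j 1)
    (hpI' : ∀ j ∉ I, p (Finsupp.single j 1) = 0)
    (Δ : slJ F J →ₗ[F] slJ F J)
    (hΔ : ∀ x : slJ F J, ∃ D : LieDerivation F (slJ F J) (slJ F J), Δ x = D x) :
    ∃ hmem : ∀ x : slI F I p hpI hpI',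
        (p * (Δ (slItoslJ F I p hpI hpI' x) : Module.End F (J →₀ F)) * p)
          ∈ slI F I p hpI hpI',
      ∃ Φ : slI F I p hpI hpI' →ₗ[F] slI F I p hpI hpI',
        (∀ x : slI F I p hpI hpI',
          (Φ x : Module.End F (J →₀ F))
            = p * (Δ (slItoslJ F I p hpI hpI' x) : Module.End F (J →₀ F)) * p) ∧
        ∀ x : slI F I p hpI hpI',
          ∃ D : LieDerivation F (slI F I p hpI hpI') (slI F I p hpI hpI'), Φ x = D x := by
  have h2 : (2 : F) ≠ 0 := two_ne_zero
  have hmem (x : slI F I p hpI hpI') :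
      p * (Δ (slItoslJ F I p hpI hpI' x) : Module.End F (J →₀ F)) * p ∈ slI F I p hpI hpI' := by
    obtain ⟨D, hD⟩ := hΔ (slItoslJ F I p hpI hpI' x)
    rw [hD]
    exact proj_mul_derivation_mul_proj_mem_slI hpI hpI' h2 hIfin D x
  refine ⟨hmem, compressLinearMap hpI hpI' Δ hmem, fun x => rfl, fun x => ?_⟩
  obtain ⟨D, hD⟩ := hΔ (slItoslJ F I p hpI hpI' x)
  refine ⟨compressDerivation hpI hpI' h2 hIfin D, Subtype.ext ?_⟩
  change p * (Δ (slItoslJ F I p hpI hpI' x) : Module.End F (J →₀ F)) * p =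
    p * (D (slItoslJ F I p hpI hpI' x) : Module.End F (J →₀ F)) * p
  rw [hD]

/-- Let `F` be of characteristic zero, `J` infinite, `I ⊆ J` finite with at least two
elements and let `p` be the projection onto the coordinates in `I`.  If `Δ` is a local
derivation of `sl_J(F)`, then for `x ∈ sl_I(F)` the compression `p ∘ (Δ x) ∘ p` again
lies in `sl_I(F)`, and `x ↦ p ∘ (Δ x) ∘ p` is a local derivation of `sl_I(F)`. -/
theorem compression_localDerivation_slI (F : Type*) [Field F] [CharZero F]
    (J : Type*) [Infinite J] (I : Set J) (hIfin : I.Finite) (hIcard : 2 ≤ Nat.card I)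
    (p : Module.End F (J →₀ F))
    (hpI : ∀ j ∈ I, p (Finsupp.single j 1) = Finsupp.single j 1)
    (hpI' : ∀ j ∉ I, p (Finsupp.single j 1) = 0)
    (Δ : slJ F J →ₗ[F] slJ F J)
    (hΔ : ∀ x : slJ F J, ∃ D : LieDerivation F (slJ F J) (slJ F J), Δ x = D x) :
    ∃ hmem : ∀ x : slI F I p hpI hpI',
        (p * (Δ (slItoslJ F I p hpI hpI' x) : Module.End F (J →₀ F)) * p)
          ∈ slI F I p hpI hpI',
      ∃ Φ : slI F I p hpI hpI' →ₗ[F] slI F I p hpI hpI',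
        (∀ x : slI F I p hpI hpI',
          (Φ x : Module.End F (J →₀ F))
            = p * (Δ (slItoslJ F I p hpI hpI' x) : Module.End F (J →₀ F)) * p) ∧
        ∀ x : slI F I p hpI hpI',
          ∃ D : LieDerivation F (slI F I p hpI hpI') (slI F I p hpI hpI'), Φ x = D x :=
  compression_localDerivation_slI_general F J I hIfin p hpI hpI' Δ hΔ
end

section
/- Let L be a Lie algebra over a field F admitting a bilinear form κ : L × L → F that is symmetric, nondegenerate, and invariant under all derivations of L. Then every 2-local derivation ∇ of L is additive: ∇(x + y) = ∇(x) + ∇(y) for all x, y ∈ L. -/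
/-! Applying the 2-local condition to the pair `(u, z)` and invariance of `κ` gives
`κ (∇ u) z = κ u (-∇ z)` for all `u, z`. A map admitting an adjoint with respect to a
left-separating form is additive, since `κ (∇ (x + y)) = κ (∇ x + ∇ y)` as functionals. -/

theorem LinearMap.SeparatingLeft.map_add_of_adjoint {R M N P : Type*} [CommRing R]
    [AddCommGroup M] [Module R M] [AddCommMonoid N] [Module R N] [AddCommGroup P] [Module R P]
    {B : M →ₗ[R] N →ₗ[R] P} (hB : B.SeparatingLeft) {f : M → M} {g : N → N}
    (hfg : ∀ u z, B (f u) z = B u (g z)) (x y : M) : f (x + y) = f x + f y := by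
  refine sub_eq_zero.mp (hB _ fun z ↦ ?_)
  simp only [map_sub, map_add, LinearMap.sub_apply, LinearMap.add_apply, hfg, sub_self]

def IsTwoLocalDerivation (R L : Type*) [CommRing R] [LieRing L] [LieAlgebra R L]
    (nabla : L → L) : Prop :=
  ∀ x y : L, ∃ D : LieDerivation R L L, D x = nabla x ∧ D y = nabla y

theorem IsTwoLocalDerivation.apply_left_eq_apply_neg_right {R L P : Type*} [CommRing R]
    [LieRing L] [LieAlgebra R L] [AddCommGroup P] [Module R P] {nabla : L → L}
    (hnabla : IsTwoLocalDerivation R L nabla) {B : L →ₗ[R] L →ₗ[R] P}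
    (hB : ∀ D : LieDerivation R L L, ∀ x y : L, B (D x) y + B x (D y) = 0) (u z : L) :
    B (nabla u) z = B u (-nabla z) := by
  obtain ⟨D, hu, hz⟩ := hnabla u z
  rw [map_neg, ← hu, ← hz, eq_neg_iff_add_eq_zero]
  exact hB D u z

theorem twoLocalDerivation_additive_general (F : Type*) [Field F] (L : Type*) [LieRing L]
    [LieAlgebra F L]
    (kappa : L →ₗ[F] L →ₗ[F] F)
    (hnondeg : ∀ x : L, (∀ y : L, kappa x y = 0) → x = 0)
    (hinv : ∀ D : LieDerivation F L L, ∀ x y : L, kappa (D x) y + kappa x (D y) = 0)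
    (nabla : L → L)
    (h : ∀ x y : L, ∃ D : LieDerivation F L L, D x = nabla x ∧ D y = nabla y)
    (x y : L) : nabla (x + y) = nabla x + nabla y :=
  LinearMap.SeparatingLeft.map_add_of_adjoint hnondeg
    (IsTwoLocalDerivation.apply_left_eq_apply_neg_right h hinv) x y

/-- If a Lie algebra `L` over a field carries a symmetric, nondegenerate bilinear form
invariant under all derivations, then every 2-local derivation of `L` is additive. -/
theorem twoLocalDerivation_additive (F : Type*) [Field F] (L : Type*) [LieRing L]
    [LieAlgebra F L]
    (kappa : L →ₗ[F] L →ₗ[F] F)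
    (hsymm : ∀ x y : L, kappa x y = kappa y x)
    (hnondeg : ∀ x : L, (∀ y : L, kappa x y = 0) → x = 0)
    (hinv : ∀ D : LieDerivation F L L, ∀ x y : L, kappa (D x) y + kappa x (D y) = 0)
    (nabla : L → L)
    (h : ∀ x y : L, ∃ D : LieDerivation F L L, D x = nabla x ∧ D y = nabla y)
    (x y : L) : nabla (x + y) = nabla x + nabla y :=
  twoLocalDerivation_additive_general F L kappa hnondeg hinv nabla h x y
end

section
/- Let L be a Lie algebra over a field F admitting a bilinear form κ : L × L → F that is symmetric, nondegenerate, and invariant under all derivations of L. Then every 2-local derivation ∇ of L is F-linear, and hence ∇ is a local derivation of L. -/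
/-!
Since every derivation is skew-adjoint for `κ`, so is a 2-local derivation `∇`: choosing one
derivation for the pair `x, y` gives `κ (∇ x) y = -κ x (∇ y)`. The right-hand side is linear in
`x`, so nondegeneracy of `κ` forces `∇` itself to be linear.
-/

namespace LinearMap.SeparatingLeft

variable {R M N P : Type*} [CommRing R] [AddCommGroup M] [Module R M] [AddCommGroup N]
  [Module R N] [AddCommGroup P] [Module R P] {B : M →ₗ[R] N →ₗ[R] P}

theorem injective (hB : B.SeparatingLeft) : Function.Injective B :=
  LinearMap.ker_eq_bot.mp (LinearMap.separatingLeft_iff_ker_eq_bot.mp hB)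

theorem isLinearMap_of_adjoint (hB : B.SeparatingLeft) {f : M → M} (g : N → N)
    (hfg : ∀ x y, B (f x) y = B x (g y)) : IsLinearMap R f where
  map_add x z := hB.injective <| LinearMap.ext fun y => by
    simp only [map_add, LinearMap.add_apply, hfg]
  map_smul c x := hB.injective <| LinearMap.ext fun y => by
    simp only [map_smul, LinearMap.smul_apply, hfg]

end LinearMap.SeparatingLeft

theorem twoLocalDerivation_skewAdjoint {F L : Type*} [Field F] [LieRing L] [LieAlgebra F L]
    {kappa : L →ₗ[F] L →ₗ[F] F}
    (hinv : ∀ D : LieDerivation F L L, ∀ x y : L, kappa (D x) y + kappa x (D y) = 0)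
    {nabla : L → L} (h : ∀ x y : L, ∃ D : LieDerivation F L L, D x = nabla x ∧ D y = nabla y)
    (x y : L) : kappa (nabla x) y = kappa x (-nabla y) := by
  obtain ⟨D, hx, hy⟩ := h x y
  rw [map_neg, ← hx, ← hy, eq_neg_iff_add_eq_zero]
  exact hinv D x y

theorem twoLocalDerivation_isLocalDerivation_general (F : Type*) [Field F] (L : Type*) [LieRing L]
    [LieAlgebra F L]
    (kappa : L →ₗ[F] L →ₗ[F] F)
    (hnondeg : ∀ x : L, (∀ y : L, kappa x y = 0) → x = 0)
    (hinv : ∀ D : LieDerivation F L L, ∀ x y : L, kappa (D x) y + kappa x (D y) = 0)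
    (nabla : L → L)
    (h : ∀ x y : L, ∃ D : LieDerivation F L L, D x = nabla x ∧ D y = nabla y) :
    ∃ Δ : L →ₗ[F] L, ⇑Δ = nabla ∧ ∀ x : L, ∃ D : LieDerivation F L L, Δ x = D x := by
  have hlin : IsLinearMap F nabla :=
    LinearMap.SeparatingLeft.isLinearMap_of_adjoint hnondeg (fun y => -nabla y)
      (twoLocalDerivation_skewAdjoint hinv h)
  refine ⟨IsLinearMap.mk' nabla hlin, rfl, fun x => ?_⟩
  obtain ⟨D, hx, -⟩ := h x x
  exact ⟨D, hx.symm⟩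

/-- If a Lie algebra `L` over a field carries a symmetric, nondegenerate bilinear form
invariant under all derivations, then every 2-local derivation of `L` is `F`-linear, and
hence is a local derivation. -/
theorem twoLocalDerivation_isLocalDerivation (F : Type*) [Field F] (L : Type*) [LieRing L]
    [LieAlgebra F L]
    (kappa : L →ₗ[F] L →ₗ[F] F)
    (hsymm : ∀ x y : L, kappa x y = kappa y x)
    (hnondeg : ∀ x : L, (∀ y : L, kappa x y = 0) → x = 0)
    (hinv : ∀ D : LieDerivation F L L, ∀ x y : L, kappa (D x) y + kappa x (D y) = 0)
    (nabla : L → L)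
    (h : ∀ x y : L, ∃ D : LieDerivation F L L, D x = nabla x ∧ D y = nabla y) :
    ∃ Δ : L →ₗ[F] L, ⇑Δ = nabla ∧ ∀ x : L, ∃ D : LieDerivation F L L, Δ x = D x :=
  twoLocalDerivation_isLocalDerivation_general F L kappa hnondeg hinv nabla h
end
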